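/- arXiv:2205.08167 — 2 statements merged into one kernel-verified Lean document; each statement's English description precedes it below -/
import Mathlib

section
/- Let d ≥ 3 and let u ∈ H¹(ℝ^d) be radial in the first d−1 variables, i.e. u(y, x_d) = u(|y|, x_d) for x = (y, x_d) ∈ ℝ^{d−1} × ℝ. Then there is a constant C > 0 depending only on d such that for every R > 0, ∫_ℝ ‖u(·, x_d)‖²_{L^∞({y ∈ ℝ^{d−1} : |y| ≥ R})} dx_d ≤ C R^{−(d−2)} ‖u‖_{L²(ℝ^d)} ‖∇_y u‖_{L²(ℝ^d)}, where ∇_y is the gradient in the first d−1 variables. -/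
/-!
On each slice `x_d = t` the function `w = u(·, t)` is radial, `w y = φ ‖y‖`. Since `‖φ‖²` is
integrable against `ρ ^ (d - 2) dρ` it tends to `0` at infinity, so for `r ≥ R`
`‖φ r‖² ≤ 2 ∫_r^∞ ‖φ‖ ‖φ'‖ ≤ 2 R^{-(d-2)} ∫_0^∞ ρ^{d-2} ‖φ‖ ‖φ'‖ dρ`, and in polar coordinates
the last integral is `∫ ‖w‖ ‖∂_r w‖ dy` divided by the area of the unit sphere. Integrating in `t`,
Cauchy–Schwarz and `‖∂_r u‖ ≤ ‖∇_y u‖` finish the proof.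
-/

open MeasureTheory Real Set Metric

theorem norm_sq_le_two_mul_integral_Ioi {F : Type*} [NormedAddCommGroup F] [InnerProductSpace ℝ F]
    {φ φ' : ℝ → F} {a : ℝ} (hφ : ∀ x, HasDerivAt φ (φ' x) x)
    (hφ2 : IntegrableOn (fun x => ‖φ x‖ ^ 2) (Ioi a))
    (hφφ' : IntegrableOn (fun x => ‖φ x‖ * ‖φ' x‖) (Ioi a)) :
    ‖φ a‖ ^ 2 ≤ 2 * ∫ x in Ioi a, ‖φ x‖ * ‖φ' x‖ := by
  have hderiv : ∀ x, HasDerivAt (fun x => ‖φ x‖ ^ 2) (2 * inner ℝ (φ x) (φ' x)) x :=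
    fun x => (hφ x).norm_sq
  have hbound : ∀ x, ‖2 * inner ℝ (φ x) (φ' x)‖ ≤ 2 * (‖φ x‖ * ‖φ' x‖) := fun x => by
    rw [norm_mul, Real.norm_two]
    exact mul_le_mul_of_nonneg_left (norm_inner_le_norm _ _) zero_le_two
  have hint : IntegrableOn (fun x => 2 * inner ℝ (φ x) (φ' x)) (Ioi a) := by
    refine (hφφ'.const_mul 2).mono' ?_ (Filter.Eventually.of_forall hbound)
    have : (fun x => 2 * inner ℝ (φ x) (φ' x)) = deriv fun x => ‖φ x‖ ^ 2 :=
      funext fun x => (hderiv x).deriv.symm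
    rw [this]
    exact (measurable_deriv _).aestronglyMeasurable
  have hlim : Filter.Tendsto (fun x => ‖φ x‖ ^ 2) Filter.atTop (nhds 0) :=
    tendsto_zero_of_hasDerivAt_of_integrableOn_Ioi (fun x _ => hderiv x) hint hφ2
  have hFTC := integral_Ioi_of_hasDerivAt_of_tendsto' (fun x _ => hderiv x) hint hlim
  calc ‖φ a‖ ^ 2 = -∫ x in Ioi a, 2 * inner ℝ (φ x) (φ' x) := by rw [hFTC]; ring
    _ ≤ ∫ x in Ioi a, 2 * (‖φ x‖ * ‖φ' x‖) :=
        (neg_le_abs _).trans ((norm_integral_le_integral_norm _).trans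
          (integral_mono hint.norm (hφφ'.const_mul 2) hbound))
    _ = 2 * ∫ x in Ioi a, ‖φ x‖ * ‖φ' x‖ := integral_const_mul _ _

theorem integrableOn_Ioi_of_integrableOn_pow_mul {f : ℝ → ℝ} {m : ℕ} {a : ℝ} (ha : 0 < a)
    (hf : IntegrableOn (fun x => x ^ m * f x) (Ioi 0)) : IntegrableOn f (Ioi a) := by
  have hbdd : IntegrableOn (fun x => (x ^ m)⁻¹ * (x ^ m * f x)) (Ioi a) := by
    refine (hf.mono_set (Ioi_subset_Ioi ha.le)).bdd_mul (c := (a ^ m)⁻¹)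
      (by fun_prop) ((ae_restrict_iff' measurableSet_Ioi).2 (Filter.Eventually.of_forall ?_))
    intro x (hx : a < x)
    rw [norm_inv, norm_pow, Real.norm_of_nonneg (ha.trans hx).le]
    exact inv_anti₀ (pow_pos ha m) (pow_le_pow_left₀ ha.le hx.le m)
  refine hbdd.congr_fun (fun x (hx : a < x) => ?_) measurableSet_Ioi
  exact inv_mul_cancel_left₀ (pow_pos (ha.trans hx) m).ne' _

theorem norm_sq_le_div_pow_mul_integral_Ioi {F : Type*} [NormedAddCommGroup F]
    [InnerProductSpace ℝ F] {φ φ' : ℝ → F} (hφ : ∀ x, HasDerivAt φ (φ' x) x) {m : ℕ}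
    (hφ2 : IntegrableOn (fun x => x ^ m * ‖φ x‖ ^ 2) (Ioi 0))
    (hφφ' : IntegrableOn (fun x => x ^ m * (‖φ x‖ * ‖φ' x‖)) (Ioi 0))
    {R r : ℝ} (hR : 0 < R) (hr : R ≤ r) :
    ‖φ r‖ ^ 2 ≤ 2 / R ^ m * ∫ x in Ioi 0, x ^ m * (‖φ x‖ * ‖φ' x‖) := by
  have hr0 : 0 < r := hR.trans_le hr
  calc ‖φ r‖ ^ 2 ≤ 2 * ∫ x in Ioi r, ‖φ x‖ * ‖φ' x‖ :=
        norm_sq_le_two_mul_integral_Ioi hφ (integrableOn_Ioi_of_integrableOn_pow_mul hr0 hφ2)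
          (integrableOn_Ioi_of_integrableOn_pow_mul hr0 hφφ')
    _ ≤ 2 * ∫ x in Ioi r, (R ^ m)⁻¹ * (x ^ m * (‖φ x‖ * ‖φ' x‖)) := by
        gcongr 2 * ?_
        refine setIntegral_mono_on (integrableOn_Ioi_of_integrableOn_pow_mul hr0 hφφ')
          ((hφφ'.mono_set (Ioi_subset_Ioi hr0.le)).const_mul _) measurableSet_Ioi
          fun x (hx : r < x) => ?_
        rw [← mul_assoc]
        refine le_mul_of_one_le_left (by positivity) ?_
        rw [← div_eq_inv_mul, one_le_div (by positivity)]
        exact pow_le_pow_left₀ hR.le (hr.trans hx.le) m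
    _ = 2 / R ^ m * ∫ x in Ioi r, x ^ m * (‖φ x‖ * ‖φ' x‖) := by
        rw [integral_const_mul]; ring
    _ ≤ 2 / R ^ m * ∫ x in Ioi 0, x ^ m * (‖φ x‖ * ‖φ' x‖) := by
        refine mul_le_mul_of_nonneg_left (setIntegral_mono_set hφφ' ?_
          (Ioi_subset_Ioi hr0.le).eventuallyLE) (by positivity)
        exact (ae_restrict_iff' measurableSet_Ioi).2 (Filter.Eventually.of_forall
          fun x (hx : 0 < x) => by positivity)

theorem fderiv_apply_self_eq_of_norm_eq {E F : Type*} [NormedAddCommGroup E] [NormedSpace ℝ E]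
    [NormedAddCommGroup F] [NormedSpace ℝ F] {w : E → F}
    (hrad : ∀ y y', ‖y‖ = ‖y'‖ → w y = w y') {y y' : E} (hy : DifferentiableAt ℝ w y)
    (hy' : DifferentiableAt ℝ w y') (h : ‖y‖ = ‖y'‖) :
    fderiv ℝ w y y = fderiv ℝ w y' y' := by
  have hray : ∀ z, DifferentiableAt ℝ w z →
      HasDerivAt (fun s : ℝ => w (s • z)) (fderiv ℝ w z z) 1 := fun z hz =>
    hz.hasFDerivAt.comp_hasDerivAt_of_eq 1
      (by simpa using (hasDerivAt_id (1 : ℝ)).smul_const z) (one_smul ℝ z).symm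
  have hrays : (fun s : ℝ => w (s • y)) = fun s => w (s • y') :=
    funext fun s => hrad _ _ (by rw [norm_smul, norm_smul, h])
  exact (hray y hy).unique (hrays ▸ hray y' hy')

theorem fderiv_apply_inv_norm_smul_eq_of_norm_eq {E F : Type*} [NormedAddCommGroup E]
    [NormedSpace ℝ E] [NormedAddCommGroup F] [NormedSpace ℝ F] {w : E → F}
    (hw : Differentiable ℝ w) (hrad : ∀ y y', ‖y‖ = ‖y'‖ → w y = w y') {e : E} (he : ‖e‖ = 1)
    {z : E} (hz : z ≠ 0) :
    fderiv ℝ w z (‖z‖⁻¹ • z) = fderiv ℝ w (‖z‖ • e) e := by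
  have hnorm : ‖z‖ = ‖‖z‖ • e‖ := by rw [norm_smul, he, norm_norm, mul_one]
  rw [map_smul, fderiv_apply_self_eq_of_norm_eq hrad (hw z) (hw _) hnorm, map_smul, smul_smul,
    inv_mul_cancel₀ (norm_ne_zero_iff.2 hz), one_smul]

theorem finrank_mul_measureReal_ball_pos {E : Type*} [NormedAddCommGroup E] [NormedSpace ℝ E]
    [FiniteDimensional ℝ E] [MeasurableSpace E] [BorelSpace E] [Nontrivial E]
    (μ : Measure E) [μ.IsAddHaarMeasure] :
    0 < Module.finrank ℝ E * μ.real (ball 0 1) :=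
  mul_pos (by exact_mod_cast Module.finrank_pos)
    (ENNReal.toReal_pos (measure_ball_pos μ 0 one_pos).ne' measure_ball_lt_top.ne)

theorem norm_sq_le_of_radial {E F : Type*} [NormedAddCommGroup E] [NormedSpace ℝ E]
    [FiniteDimensional ℝ E] [MeasurableSpace E] [BorelSpace E] [Nontrivial E]
    (μ : Measure E) [μ.IsAddHaarMeasure] [NormedAddCommGroup F] [InnerProductSpace ℝ F]
    {w : E → F} (hw : Differentiable ℝ w) (hrad : ∀ y y', ‖y‖ = ‖y'‖ → w y = w y')
    (hw2 : Integrable (fun z => ‖w z‖ ^ 2) μ)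
    (hwD : Integrable (fun z => ‖w z‖ * ‖fderiv ℝ w z (‖z‖⁻¹ • z)‖) μ)
    {R : ℝ} (hR : 0 < R) {y : E} (hy : R ≤ ‖y‖) :
    ‖w y‖ ^ 2 ≤ 2 / (Module.finrank ℝ E * μ.real (ball 0 1) * R ^ (Module.finrank ℝ E - 1)) *
      ∫ z, ‖w z‖ * ‖fderiv ℝ w z (‖z‖⁻¹ • z)‖ ∂μ := by
  obtain ⟨e, he⟩ := exists_norm_eq E zero_le_one
  set φ : ℝ → F := fun ρ => w (ρ • e)
  set φ' : ℝ → F := fun ρ => fderiv ℝ w (ρ • e) e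
  have hφ : ∀ ρ, HasDerivAt φ (φ' ρ) ρ := fun ρ =>
    (hw _).hasFDerivAt.comp_hasDerivAt ρ (by simpa using (hasDerivAt_id ρ).smul_const e)
  have hwφ : ∀ z, w z = φ ‖z‖ := fun z => hrad _ _ (by rw [norm_smul, he, norm_norm, mul_one])
  have hprofile : (fun z => ‖w z‖ * ‖fderiv ℝ w z (‖z‖⁻¹ • z)‖) =ᵐ[μ]
      fun z => ‖φ ‖z‖‖ * ‖φ' ‖z‖‖ := by
    filter_upwards [μ.ae_ne 0] with z hz
    rw [hwφ, fderiv_apply_inv_norm_smul_eq_of_norm_eq hw hrad he hz]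
  set m := Module.finrank ℝ E - 1
  set σ := Module.finrank ℝ E * μ.real (ball (0 : E) 1)
  have hφ2 : IntegrableOn (fun ρ => ρ ^ m * ‖φ ρ‖ ^ 2) (Ioi 0) := by
    simpa only [hwφ, integrable_fun_norm_addHaar μ (f := fun ρ => ‖φ ρ‖ ^ 2), smul_eq_mul]
      using hw2
  have hφφ' : IntegrableOn (fun ρ => ρ ^ m * (‖φ ρ‖ * ‖φ' ρ‖)) (Ioi 0) := by
    simpa only [integrable_congr hprofile, smul_eq_mul,
      integrable_fun_norm_addHaar μ (f := fun ρ => ‖φ ρ‖ * ‖φ' ρ‖)] using hwD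
  have hpolar : ∫ z, ‖w z‖ * ‖fderiv ℝ w z (‖z‖⁻¹ • z)‖ ∂μ =
      σ * ∫ ρ in Ioi 0, ρ ^ m * (‖φ ρ‖ * ‖φ' ρ‖) := by
    rw [integral_congr_ae hprofile, integral_fun_norm_addHaar μ (fun ρ => ‖φ ρ‖ * ‖φ' ρ‖),
      nsmul_eq_mul, smul_eq_mul, ← mul_assoc]
    simp only [smul_eq_mul]
    rfl
  have hσ : σ ≠ 0 := (finrank_mul_measureReal_ball_pos μ).ne'
  rw [hpolar, hwφ]
  calc ‖φ ‖y‖‖ ^ 2 ≤ 2 / R ^ m * ∫ ρ in Ioi 0, ρ ^ m * (‖φ ρ‖ * ‖φ' ρ‖) :=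
        norm_sq_le_div_pow_mul_integral_Ioi hφ hφ2 hφφ' hR hy
    _ = 2 / (σ * R ^ m) * (σ * ∫ ρ in Ioi 0, ρ ^ m * (‖φ ρ‖ * ‖φ' ρ‖)) := by
        generalize ∫ ρ in Ioi 0, ρ ^ m * (‖φ ρ‖ * ‖φ' ρ‖) = I
        field_simp

theorem norm_sq_apply_le_norm_sq_mul_sum {ι F : Type*} [Fintype ι] [DecidableEq ι]
    [NormedAddCommGroup F] [NormedSpace ℝ F]
    (L : EuclideanSpace ℝ ι →L[ℝ] F) (v : EuclideanSpace ℝ ι) :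
    ‖L v‖ ^ 2 ≤ ‖v‖ ^ 2 * ∑ i, ‖L (EuclideanSpace.single i 1)‖ ^ 2 := by
  have hv : v = ∑ i, v i • EuclideanSpace.single i (1 : ℝ) := by
    simpa using ((EuclideanSpace.basisFun ι ℝ).sum_repr v).symm
  have htri : ‖L v‖ ≤ ∑ i, ‖v i‖ * ‖L (EuclideanSpace.single i 1)‖ := by
    conv_lhs => rw [hv]
    simpa only [map_sum, map_smul, norm_smul] using
      norm_sum_le Finset.univ fun i => v i • L (EuclideanSpace.single i 1)
  calc ‖L v‖ ^ 2 ≤ (∑ i, ‖v i‖ * ‖L (EuclideanSpace.single i 1)‖) ^ 2 :=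
        pow_le_pow_left₀ (norm_nonneg _) htri 2
    _ ≤ (∑ i, ‖v i‖ ^ 2) * ∑ i, ‖L (EuclideanSpace.single i 1)‖ ^ 2 :=
        Finset.sum_mul_sq_le_sq_mul_sq _ _ _
    _ = ‖v‖ ^ 2 * ∑ i, ‖L (EuclideanSpace.single i 1)‖ ^ 2 := by
        rw [EuclideanSpace.norm_sq_eq]

theorem fderiv_comp_prodMk_left_apply {E G F : Type*} [NormedAddCommGroup E] [NormedSpace ℝ E]
    [NormedAddCommGroup G] [NormedSpace ℝ G] [NormedAddCommGroup F] [NormedSpace ℝ F]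
    {u : E × G → F} {y : E} {t : G} (hu : DifferentiableAt ℝ u (y, t)) (v : E) :
    fderiv ℝ (fun y => u (y, t)) y v = fderiv ℝ u (y, t) (v, 0) := by
  rw [HasFDerivAt.fderiv (f := fun y => u (y, t))
    (hu.hasFDerivAt.comp y (hasFDerivAt_prodMk_left y t))]
  rfl

theorem integral_norm_mul_norm_le_sqrt_mul_sqrt {α E : Type*} [MeasurableSpace α] {μ : Measure α}
    [NormedAddCommGroup E] {f g : α → E} (hf : MemLp f 2 μ) (hg : MemLp g 2 μ) :
    ∫ a, ‖f a‖ * ‖g a‖ ∂μ ≤ √(∫ a, ‖f a‖ ^ 2 ∂μ) * √(∫ a, ‖g a‖ ^ 2 ∂μ) := by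
  have h := integral_mul_norm_le_Lp_mul_Lq (f := f) (g := g) Real.HolderConjugate.two_two
    (by rwa [ENNReal.ofReal_ofNat]) (by rwa [ENNReal.ofReal_ofNat])
  simpa only [Real.rpow_two, ← Real.sqrt_eq_rpow] using h

theorem sq_iSup_le {ι : Type*} {f : ι → ℝ} {B : ℝ} (hf : ∀ i, 0 ≤ f i) (hB0 : 0 ≤ B)
    (hB : ∀ i, f i ^ 2 ≤ B) : (⨆ i, f i) ^ 2 ≤ B :=
  calc (⨆ i, f i) ^ 2 ≤ √B ^ 2 := pow_le_pow_left₀ (Real.iSup_nonneg hf)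
        (Real.iSup_le (fun i => Real.le_sqrt_of_sq_le (hB i)) (Real.sqrt_nonneg B)) 2
    _ = B := Real.sq_sqrt hB0

noncomputable def radialPartialDeriv {E F : Type*} [NormedAddCommGroup E] [NormedSpace ℝ E]
    [NormedAddCommGroup F] [NormedSpace ℝ F] (u : E × ℝ → F) (x : E × ℝ) : F :=
  fderiv ℝ u x (‖x.1‖⁻¹ • x.1, 0)

section RadialPartialDeriv

variable {F : Type*} [NormedAddCommGroup F] [NormedSpace ℝ F]

theorem measurable_radialPartialDeriv {E : Type*} [NormedAddCommGroup E] [NormedSpace ℝ E]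
    [FiniteDimensional ℝ E] [MeasurableSpace E] [BorelSpace E] [CompleteSpace F]
    [MeasurableSpace F] [BorelSpace F] (u : E × ℝ → F) :
    Measurable (radialPartialDeriv u) := by
  have hdir : Measurable fun x : E × ℝ => ((‖x.1‖⁻¹ • x.1, 0) : E × ℝ) := by fun_prop
  exact (isBoundedBilinearMap_apply.continuous.measurable).comp
    ((measurable_fderiv ℝ u).prodMk hdir)

variable {ι : Type*} [Fintype ι] [DecidableEq ι] {u : EuclideanSpace ℝ ι × ℝ → F}

theorem norm_sq_radialPartialDeriv_le (x : EuclideanSpace ℝ ι × ℝ) :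
    ‖radialPartialDeriv u x‖ ^ 2 ≤
      ∑ i, ‖fderiv ℝ u x (EuclideanSpace.single i 1, 0)‖ ^ 2 := by
  have hdir : ‖‖x.1‖⁻¹ • x.1‖ ^ 2 ≤ 1 := by
    rw [norm_smul, norm_inv, norm_norm]
    exact pow_le_one₀ (by positivity) (inv_mul_le_one_of_le₀ le_rfl (norm_nonneg _))
  have := norm_sq_apply_le_norm_sq_mul_sum ((fderiv ℝ u x).comp (ContinuousLinearMap.inl ℝ _ ℝ))
    (‖x.1‖⁻¹ • x.1)
  exact this.trans (mul_le_of_le_one_left (by positivity) hdir)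

variable [CompleteSpace F] [MeasurableSpace F] [BorelSpace F] {μ : Measure (EuclideanSpace ℝ ι × ℝ)}

theorem integrable_norm_sq_radialPartialDeriv
    (hDu : ∀ i, MemLp (fun x => fderiv ℝ u x (EuclideanSpace.single i 1, 0)) 2 μ) :
    Integrable (fun x => ‖radialPartialDeriv u x‖ ^ 2) μ :=
  (integrable_finsetSum _ fun i _ => (hDu i).norm.integrable_sq).mono'
    ((measurable_radialPartialDeriv u).norm.pow_const 2).aestronglyMeasurable
    (Filter.Eventually.of_forall fun x => by
      rw [Real.norm_of_nonneg (by positivity)]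
      simpa only [Finset.sum_apply] using norm_sq_radialPartialDeriv_le x)

theorem integral_norm_sq_radialPartialDeriv_le
    (hDu : ∀ i, MemLp (fun x => fderiv ℝ u x (EuclideanSpace.single i 1, 0)) 2 μ) :
    ∫ x, ‖radialPartialDeriv u x‖ ^ 2 ∂μ ≤
      ∑ i, ∫ x, ‖fderiv ℝ u x (EuclideanSpace.single i 1, 0)‖ ^ 2 ∂μ := by
  rw [← integral_finsetSum _ fun i _ => (hDu i).norm.integrable_sq]
  exact integral_mono (integrable_norm_sq_radialPartialDeriv hDu)
    (integrable_finsetSum _ fun i _ => (hDu i).norm.integrable_sq) norm_sq_radialPartialDeriv_le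

variable [SecondCountableTopology F]

theorem memLp_radialPartialDeriv
    (hDu : ∀ i, MemLp (fun x => fderiv ℝ u x (EuclideanSpace.single i 1, 0)) 2 μ) :
    MemLp (radialPartialDeriv u) 2 μ :=
  (memLp_two_iff_integrable_sq_norm (measurable_radialPartialDeriv u).aestronglyMeasurable).2
    (integrable_norm_sq_radialPartialDeriv hDu)

theorem integral_norm_mul_norm_radialPartialDeriv_le (hu : MemLp u 2 μ)
    (hDu : ∀ i, MemLp (fun x => fderiv ℝ u x (EuclideanSpace.single i 1, 0)) 2 μ) :
    ∫ x, ‖u x‖ * ‖radialPartialDeriv u x‖ ∂μ ≤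
      √(∫ x, ‖u x‖ ^ 2 ∂μ) * √(∑ i, ∫ x, ‖fderiv ℝ u x (EuclideanSpace.single i 1, 0)‖ ^ 2 ∂μ) :=
  (integral_norm_mul_norm_le_sqrt_mul_sqrt hu (memLp_radialPartialDeriv hDu)).trans <| by
    gcongr
    exact integral_norm_sq_radialPartialDeriv_le hDu

end RadialPartialDeriv

theorem integral_iSup_norm_sq_le_of_radial {E F : Type*} [NormedAddCommGroup E]
    [NormedSpace ℝ E] [FiniteDimensional ℝ E] [MeasurableSpace E] [BorelSpace E] [Nontrivial E]
    (μ : Measure E) [μ.IsAddHaarMeasure] [NormedAddCommGroup F] [InnerProductSpace ℝ F]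
    {u : E × ℝ → F} (hu : Differentiable ℝ u)
    (hrad : ∀ y y' t, ‖y‖ = ‖y'‖ → u (y, t) = u (y', t))
    (hu2 : Integrable (fun x => ‖u x‖ ^ 2) (μ.prod volume))
    (huD : Integrable (fun x => ‖u x‖ * ‖radialPartialDeriv u x‖) (μ.prod volume))
    {R : ℝ} (hR : 0 < R) :
    ∫ t, (⨆ y : {y : E // R ≤ ‖y‖}, ‖u (y.1, t)‖) ^ 2 ≤
      2 / (Module.finrank ℝ E * μ.real (ball 0 1) * R ^ (Module.finrank ℝ E - 1)) *
        ∫ x, ‖u x‖ * ‖radialPartialDeriv u x‖ ∂(μ.prod volume) := by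
  set K := 2 / (Module.finrank ℝ E * μ.real (ball 0 1) * R ^ (Module.finrank ℝ E - 1))
  have hslice : ∀ᵐ t, (⨆ y : {y : E // R ≤ ‖y‖}, ‖u (y.1, t)‖) ^ 2 ≤
      K * ∫ y, ‖u (y, t)‖ * ‖radialPartialDeriv u (y, t)‖ ∂μ := by
    filter_upwards [hu2.prod_left_ae, huD.prod_left_ae] with t hu2t huDt
    refine sq_iSup_le (fun _ => norm_nonneg _) (by positivity) fun y => ?_
    have hradial : ∀ z, fderiv ℝ (fun y => u (y, t)) z (‖z‖⁻¹ • z) = radialPartialDeriv u (z, t) :=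
      fun z => fderiv_comp_prodMk_left_apply (hu _) _
    simp only [← hradial] at huDt ⊢
    exact norm_sq_le_of_radial μ (hu.comp (by fun_prop)) (fun y y' => hrad y y' t) hu2t huDt hR
      y.2
  calc ∫ t, (⨆ y : {y : E // R ≤ ‖y‖}, ‖u (y.1, t)‖) ^ 2
      ≤ ∫ t, K * ∫ y, ‖u (y, t)‖ * ‖radialPartialDeriv u (y, t)‖ ∂μ :=
        integral_mono_of_nonneg (Filter.Eventually.of_forall fun t => sq_nonneg _)
          (huD.integral_prod_right.const_mul K) hslice
    _ = K * ∫ x, ‖u x‖ * ‖radialPartialDeriv u x‖ ∂(μ.prod volume) := by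
        rw [integral_const_mul, integral_prod_symm _ huD]

/-- For `u ∈ H¹(ℝ^d)` radial in the first `d−1` variables (`d ≥ 3`), and any `R > 0`,
`∫_ℝ ‖u(·,x_d)‖²_{L^∞(|y|≥R)} dx_d ≤ C R^{−(d−2)} ‖u‖₂ ‖∇_y u‖₂`. -/
theorem slice_Linfty_outer_bound
    (d : ℕ) (hd : 3 ≤ d) :
    ∃ C : ℝ, 0 < C ∧
      ∀ u : EuclideanSpace ℝ (Fin (d - 1)) × ℝ → ℂ,
        Differentiable ℝ u →
        (∀ (y y' : EuclideanSpace ℝ (Fin (d - 1))) (t : ℝ),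
            ‖y‖ = ‖y'‖ → u (y, t) = u (y', t)) →
        MemLp u 2 volume →
        (∀ i : Fin (d - 1),
            MemLp (fun x => fderiv ℝ u x (EuclideanSpace.single i 1, 0)) 2 volume) →
        MemLp (fun x => fderiv ℝ u x (0, 1)) 2 volume →
        ∀ R : ℝ, 0 < R →
          (∫ t : ℝ,
              (⨆ y : {y : EuclideanSpace ℝ (Fin (d - 1)) // R ≤ ‖y‖}, ‖u (y.1, t)‖) ^ 2) ≤
            C * R ^ (-((d : ℝ) - 2)) *
              Real.sqrt (∫ x : EuclideanSpace ℝ (Fin (d - 1)) × ℝ, ‖u x‖ ^ 2) *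
              Real.sqrt (∑ i : Fin (d - 1),
                ∫ x : EuclideanSpace ℝ (Fin (d - 1)) × ℝ,
                  ‖fderiv ℝ u x (EuclideanSpace.single i 1, 0)‖ ^ 2) := by
  have : Nonempty (Fin (d - 1)) := ⟨⟨0, by omega⟩⟩
  set n := Module.finrank ℝ (EuclideanSpace ℝ (Fin (d - 1))) with hn
  set σ := (n : ℝ) * volume.real (ball (0 : EuclideanSpace ℝ (Fin (d - 1))) 1)
  refine ⟨2 / σ, div_pos two_pos (finrank_mul_measureReal_ball_pos volume),
    fun u hu hrad hu2 hDu _ R hR => ?_⟩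
  have hK : 2 / (σ * R ^ (n - 1)) = 2 / σ * R ^ (-((d : ℝ) - 2)) := by
    rw [hn, finrank_euclideanSpace_fin, Real.rpow_neg hR.le, ← Real.rpow_natCast,
      div_mul_eq_div_div, div_eq_mul_inv _ (R ^ _)]
    congr 3
    push_cast [Nat.cast_sub (by omega : 1 ≤ d), Nat.cast_sub (by omega : 1 ≤ d - 1)]
    ring
  calc _ ≤ 2 / (σ * R ^ (n - 1)) * ∫ x, ‖u x‖ * ‖radialPartialDeriv u x‖ :=
        integral_iSup_norm_sq_le_of_radial volume hu hrad hu2.norm.integrable_sq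
          (hu2.norm.integrable_mul (memLp_radialPartialDeriv hDu).norm) hR
    _ ≤ _ := by
        grw [integral_norm_mul_norm_radialPartialDeriv_le hu2 hDu, hK]
        exact (mul_assoc _ _ _).ge
end

section
/- Let d ≥ 2 and 0 < σ < 1, and let u ∈ H¹(ℝ^d); write x = (y, x_d) ∈ ℝ^{d−1} × ℝ. Then there is a constant C > 0 depending only on σ such that ∫_ℝ ‖u(·, x_d)‖_{L²(ℝ^{d−1})}^{2/(1−σ)} dx_d ≤ C ‖∂_d u‖_{L²(ℝ^d)}^{σ/(1−σ)} ‖u‖_{L²(ℝ^d)}^{(2−σ)/(1−σ)}, where ∂_d is the partial derivative in the last coordinate. -/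
/-!
By the fundamental theorem of calculus in the last variable,
`‖u(y,t)‖² ≤ ‖u(y,a)‖² + 2 ∫ ‖u(y,s)‖ ‖∂_d u(y,s)‖ ds` for any two heights `a, t`.
Integrating in `y` and choosing `a` where the slice mass `g(a) = ‖u(·,a)‖²_{L²}` is arbitrarily
small (possible because `g` is integrable over `ℝ`) gives, with Cauchy–Schwarz,
`g ≤ 2 ‖u‖₂ ‖∂_d u‖₂` almost everywhere. Hence
`∫ g^{1/(1-σ)} = ∫ g^{σ/(1-σ)} g ≤ (2 ‖u‖₂ ‖∂_d u‖₂)^{σ/(1-σ)} ‖u‖₂²`,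
which is the claim with `C = 2^{σ/(1-σ)}`.
-/

open MeasureTheory Real Set
open scoped ENNReal

theorem MeasureTheory.Integrable.frequently_norm_lt {α β : Type*} [MeasurableSpace α]
    {μ : Measure α} [NormedAddCommGroup β] {g : α → β} (hg : Integrable g μ) (hμ : μ univ = ∞)
    {ε : ℝ} (hε : 0 < ε) : ∃ᵐ a ∂μ, ‖g a‖ < ε := by
  intro hge
  refine (hg.measure_norm_ge_lt_top hε).ne (top_unique (hμ ▸ measure_mono_ae ?_))
  filter_upwards [hge] with a ha using fun _ => not_lt.mp ha

theorem sub_le_integral_of_hasDerivAt_of_abs_le {g g' φ : ℝ → ℝ}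
    (hg : ∀ s, HasDerivAt g (g' s) s) (hφ : Integrable φ) (hg'φ : ∀ s, |g' s| ≤ φ s)
    (a b : ℝ) : g b - g a ≤ ∫ s, φ s := by
  have key : ∀ {h h' : ℝ → ℝ}, (∀ s, HasDerivAt h (h' s) s) → (∀ s, h' s ≤ φ s) →
      ∀ {a b : ℝ}, a ≤ b → h b - h a ≤ ∫ s, φ s := fun hh hh'φ a b hab => by
    refine (intervalIntegral.sub_le_integral_of_hasDeriv_right_of_le hab
      (continuous_iff_continuousAt.2 fun s => (hh s).continuousAt).continuousOn
      (fun s _ => (hh s).hasDerivWithinAt)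
      hφ.integrableOn fun s _ => hh'φ s).trans ?_
    rw [intervalIntegral.integral_of_le hab]
    exact setIntegral_le_integral hφ (ae_of_all _ fun s => (abs_nonneg _).trans (hg'φ s))
  rcases le_total a b with hab | hba
  · exact key hg (fun s => (le_abs_self _).trans (hg'φ s)) hab
  · have := key (fun s => (hg s).neg) (fun s => (neg_le_abs _).trans (hg'φ s)) hba
    simp only [Pi.neg_apply] at this
    linarith

theorem sq_norm_le_sq_norm_add_integral {F : Type*} [NormedAddCommGroup F]
    [InnerProductSpace ℝ F]
    {f f' : ℝ → F} (hf : ∀ s, HasDerivAt f (f' s) s)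
    (hff' : Integrable fun s => ‖f s‖ * ‖f' s‖) (a b : ℝ) :
    ‖f b‖ ^ 2 ≤ ‖f a‖ ^ 2 + 2 * ∫ s, ‖f s‖ * ‖f' s‖ := by
  have := sub_le_integral_of_hasDerivAt_of_abs_le (fun s => (hf s).norm_sq) (hff'.const_mul 2)
    (fun s => by
      rw [abs_mul, abs_two]
      exact mul_le_mul_of_nonneg_left (abs_real_inner_le_norm _ _) zero_le_two) a b
  rw [integral_const_mul] at this
  linarith

theorem integral_rpow_add_one_le {α : Type*} [MeasurableSpace α] {μ : Measure α} {g : α → ℝ}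
    {M p : ℝ} (hg0 : ∀ x, 0 ≤ g x) (hg : Integrable g μ) (hgM : ∀ᵐ x ∂μ, g x ≤ M)
    (hp : 0 ≤ p) : ∫ x, g x ^ (p + 1) ∂μ ≤ M ^ p * ∫ x, g x ∂μ := by
  rw [← integral_const_mul]
  refine integral_mono_of_nonneg (ae_of_all _ fun x => rpow_nonneg (hg0 x) _)
    (hg.const_mul _) ?_
  filter_upwards [hgM] with x hx
  rw [rpow_add_one' (hg0 x) (by positivity)]
  exact mul_le_mul_of_nonneg_right (rpow_le_rpow (hg0 x) hx hp) (hg0 x)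

theorem integral_mul_norm_le_sqrt_mul_sqrt {α E : Type*} [MeasurableSpace α] {μ : Measure α}
    [NormedAddCommGroup E] {f g : α → E} (hf : MemLp f 2 μ) (hg : MemLp g 2 μ) :
    ∫ x, ‖f x‖ * ‖g x‖ ∂μ ≤ √(∫ x, ‖f x‖ ^ 2 ∂μ) * √(∫ x, ‖g x‖ ^ 2 ∂μ) := by
  have h := integral_mul_norm_le_Lp_mul_Lq HolderConjugate.two_two (p := 2) (q := 2)
    (by simpa using hf) (by simpa using hg)
  simpa only [rpow_two, sqrt_eq_rpow] using h

section Slices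

variable {E F : Type*} [NormedAddCommGroup E] [NormedSpace ℝ E] [MeasurableSpace E]
  {μ : Measure E} [SigmaFinite μ] [NormedAddCommGroup F] [InnerProductSpace ℝ F]
  {u : E × ℝ → F}

theorem ae_integral_sq_norm_slice_le (hu : Differentiable ℝ u)
    (hu2 : Integrable (fun x => ‖u x‖ ^ 2) (μ.prod volume))
    (hud : Integrable (fun x => ‖u x‖ * ‖fderiv ℝ u x (0, 1)‖) (μ.prod volume)) :
    ∀ᵐ t, ∫ y, ‖u (y, t)‖ ^ 2 ∂μ ≤
      2 * ∫ x, ‖u x‖ * ‖fderiv ℝ u x (0, 1)‖ ∂(μ.prod volume) := by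
  have hderiv : ∀ y s, HasDerivAt (fun s => u (y, s)) (fderiv ℝ u (y, s) (0, 1)) s :=
    fun y s => (hu (y, s)).hasFDerivAt.comp_hasDerivAt s
      ((hasDerivAt_const s y).prodMk (hasDerivAt_id s))
  have hslice := hu2.prod_left_ae
  have hcompare : ∀ a t, Integrable (fun y => ‖u (y, a)‖ ^ 2) μ →
      Integrable (fun y => ‖u (y, t)‖ ^ 2) μ →
      ∫ y, ‖u (y, t)‖ ^ 2 ∂μ ≤ ∫ y, ‖u (y, a)‖ ^ 2 ∂μ +
        2 * ∫ x, ‖u x‖ * ‖fderiv ℝ u x (0, 1)‖ ∂(μ.prod volume) := fun a t ha ht => by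
    rw [integral_prod _ hud, ← integral_const_mul, ← integral_add ha
      (hud.integral_prod_left.const_mul 2)]
    refine integral_mono_ae ht (ha.add (hud.integral_prod_left.const_mul 2)) ?_
    filter_upwards [hud.prod_right_ae] with y hy
    exact sq_norm_le_sq_norm_add_integral (hderiv y) hy a t
  have hsmall : ∀ ε > 0, ∃ a, Integrable (fun y => ‖u (y, a)‖ ^ 2) μ ∧
      ∫ y, ‖u (y, a)‖ ^ 2 ∂μ < ε := fun ε hε => by
    obtain ⟨a, ha, hslice_a⟩ :=
      ((hu2.integral_prod_right.frequently_norm_lt Real.volume_univ hε).and_eventually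
        hslice).exists
    exact ⟨a, hslice_a, (le_abs_self _).trans_lt ha⟩
  filter_upwards [hslice] with t ht
  refine le_of_forall_pos_le_add fun ε hε => ?_
  obtain ⟨a, ha, haε⟩ := hsmall ε hε
  linarith [hcompare a t ha ht]

theorem integral_sqrt_integral_sq_norm_slice_rpow_le (hu : Differentiable ℝ u)
    (hu2 : MemLp u 2 (μ.prod volume))
    (hud : MemLp (fun x => fderiv ℝ u x (0, 1)) 2 (μ.prod volume)) {σ : ℝ} (hσ0 : 0 ≤ σ)
    (hσ1 : σ < 1) :
    ∫ t, √(∫ y, ‖u (y, t)‖ ^ 2 ∂μ) ^ (2 / (1 - σ)) ≤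
      2 ^ (σ / (1 - σ)) * √(∫ x, ‖fderiv ℝ u x (0, 1)‖ ^ 2 ∂(μ.prod volume)) ^ (σ / (1 - σ)) *
        √(∫ x, ‖u x‖ ^ 2 ∂(μ.prod volume)) ^ ((2 - σ) / (1 - σ)) := by
  have h1σ : 0 < 1 - σ := by linarith
  set p := σ / (1 - σ)
  have hp : 0 ≤ p := by positivity
  set A := ∫ x, ‖u x‖ ^ 2 ∂(μ.prod volume)
  set B := ∫ x, ‖fderiv ℝ u x (0, 1)‖ ^ 2 ∂(μ.prod volume)
  set g := fun t => ∫ y, ‖u (y, t)‖ ^ 2 ∂μ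
  have hg0 : ∀ t, 0 ≤ g t := fun t => integral_nonneg fun y => by positivity
  have hu2' := (memLp_two_iff_integrable_sq_norm hu2.1).1 hu2
  have hud' : Integrable (fun x => ‖u x‖ * ‖fderiv ℝ u x (0, 1)‖) (μ.prod volume) :=
    hu2.norm.integrable_mul hud.norm
  have hgA : ∫ t, g t = A := (integral_prod_symm _ hu2').symm
  have hexp_g : ∀ t, √(g t) ^ (2 / (1 - σ)) = g t ^ (p + 1) := fun t => by
    rw [sqrt_eq_rpow, ← rpow_mul (hg0 t)]
    congr 1
    simp only [p]
    field_simp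
    ring
  have hexp_A : √A ^ ((2 - σ) / (1 - σ)) = √A ^ p * A := by
    rw [show (2 - σ) / (1 - σ) = p + 2 by simp only [p]; field_simp; ring,
      rpow_add' (sqrt_nonneg A) (by positivity), rpow_two,
      sq_sqrt (integral_nonneg fun x => by positivity)]
  calc ∫ t, √(g t) ^ (2 / (1 - σ)) = ∫ t, g t ^ (p + 1) := by simp only [hexp_g]
    _ ≤ (2 * ∫ x, ‖u x‖ * ‖fderiv ℝ u x (0, 1)‖ ∂(μ.prod volume)) ^ p * A := by
      rw [← hgA]
      exact integral_rpow_add_one_le hg0 hu2'.integral_prod_right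
        (ae_integral_sq_norm_slice_le hu hu2' hud') hp
    _ ≤ (2 * (√A * √B)) ^ p * A := by
      gcongr
      exact integral_mul_norm_le_sqrt_mul_sqrt hu2 hud
    _ = 2 ^ p * √B ^ p * √A ^ ((2 - σ) / (1 - σ)) := by
      rw [hexp_A, mul_rpow zero_le_two (by positivity), mul_rpow (sqrt_nonneg _) (sqrt_nonneg _)]
      ring

end Slices

/-- For `0 < σ < 1` there is `C = C(σ) > 0` such that for every `d ≥ 2` and
`u ∈ H¹(ℝ^d)`, writing `x = (y, x_d)`,
`∫_ℝ ‖u(·,x_d)‖_{L²_y}^{2/(1−σ)} dx_d ≤ C ‖∂_d u‖₂^{σ/(1−σ)} ‖u‖₂^{(2−σ)/(1−σ)}`. -/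
theorem slice_L2_interpolation
    (σ : ℝ) (hσ0 : 0 < σ) (hσ1 : σ < 1) :
    ∃ C : ℝ, 0 < C ∧
      ∀ d : ℕ, 2 ≤ d →
      ∀ u : EuclideanSpace ℝ (Fin (d - 1)) × ℝ → ℂ,
        Differentiable ℝ u →
        MemLp u 2 volume →
        (∀ i : Fin (d - 1),
            MemLp (fun x => fderiv ℝ u x (EuclideanSpace.single i 1, 0)) 2 volume) →
        MemLp (fun x => fderiv ℝ u x (0, 1)) 2 volume →
        (∫ t : ℝ,
            (Real.sqrt (∫ y : EuclideanSpace ℝ (Fin (d - 1)), ‖u (y, t)‖ ^ 2)) ^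
              (2 / (1 - σ))) ≤
          C * (Real.sqrt (∫ x : EuclideanSpace ℝ (Fin (d - 1)) × ℝ,
                ‖fderiv ℝ u x (0, 1)‖ ^ 2)) ^ (σ / (1 - σ)) *
            (Real.sqrt (∫ x : EuclideanSpace ℝ (Fin (d - 1)) × ℝ, ‖u x‖ ^ 2)) ^
              ((2 - σ) / (1 - σ)) := by
  refine ⟨2 ^ (σ / (1 - σ)), by positivity, fun d _ u hu hu2 _ hud => ?_⟩
  rw [Measure.volume_eq_prod] at hu2 hud ⊢
  exact integral_sqrt_integral_sq_norm_slice_rpow_le hu hu2 hud hσ0.le hσ1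
end
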